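/- Let G be a group admitting a 2-starter F (a twofold 2-starter additionally satisfying F + y = F for some involution y ∈ G). Then the orbit Orb_G(F) of F under translation has exactly |G|/2 distinct elements, and these form a 2-factorization of the complete graph K_{|G|+1} on vertex set G ∪ {∞}. -/

import Mathlib

/-- Translation of a vertex of `G ∪ {∞}` (encoded as `Option G`, `none = ∞`). -/
def trVert {G : Type*} [AddGroup G] (g : G) : Option G → Option G :=
  Option.map (· + g)

/-- The translate `H + g` of a graph `H` on `G ∪ {∞}`. -/
def translateGraph {G : Type*} [AddGroup G] (g : G)
    (H : SimpleGraph (Option G)) : SimpleGraph (Option G) where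
  Adj u v := H.Adj (trVert (-g) u) (trVert (-g) v)
  symm := ⟨fun _ _ h => h.symm⟩
  loopless := ⟨fun _ h => H.loopless.irrefl _ h⟩

/-!
For distinct vertices `u, w`, the shifts `g` with `uw ∈ F + g` correspond bijectively to the two
neighbours of `∞` (when `u` or `w` is `∞`) or to the two edges of `F` of difference `u - w`
(right translation preserves differences).  Since `F + (y + g) = F + g`, these two shifts are `g`
and `y + g`.  Hence every edge of `K_{|G|+1}` lies in exactly one translate, and, looking at the
translates of a single edge of `F`, two shifts give the same translate only if they differ by `y`,
so the orbit has `|G|/2` elements.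
-/

lemma card_eq_two_mul_ncard_range {α β : Type*} [Fintype α] (f : α → β)
    (hfib : ∀ a, {a' | f a' = f a}.ncard = 2) :
    Fintype.card α = 2 * (Set.range f).ncard := by
  classical
  rw [← Set.image_univ, ← Finset.coe_univ, ← Finset.coe_image, Set.ncard_coe_finset,
    ← Finset.card_univ, Finset.card_eq_sum_card_image f Finset.univ, Finset.sum_const_nat,
    mul_comm]
  rintro _ hb
  obtain ⟨a, -, rfl⟩ := Finset.mem_image.mp hb
  rw [← hfib a, ← Set.ncard_coe_finset]
  simp

section Translation

variable {G : Type*} [AddGroup G]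

@[simp] lemma trVert_none (g : G) : trVert g none = none := rfl

@[simp] lemma trVert_some (g a : G) : trVert g (some a) = some (a + g) := rfl

@[simp] lemma trVert_neg_trVert (g : G) (u : Option G) : trVert (-g) (trVert g u) = u := by
  cases u <;> simp

@[simp] lemma translateGraph_adj (g : G) (F : SimpleGraph (Option G)) (u w : Option G) :
    (translateGraph g F).Adj u w ↔ F.Adj (trVert (-g) u) (trVert (-g) w) := Iff.rfl

lemma translateGraph_translateGraph (a b : G) (F : SimpleGraph (Option G)) :
    translateGraph a (translateGraph b F) = translateGraph (b + a) F := by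
  ext u w
  cases u <;> cases w <;> simp [add_assoc]

lemma translateGraph_add_left_of_fixed {y : G} {F : SimpleGraph (Option G)}
    (hfix : translateGraph y F = F) (g : G) :
    translateGraph (y + g) F = translateGraph g F := by
  rw [← translateGraph_translateGraph, hfix]

def edgeShifts (F : SimpleGraph (Option G)) (u w : Option G) : Set G :=
  {g | (translateGraph g F).Adj u w}

variable {F : SimpleGraph (Option G)}

lemma edgeShifts_comm (u w : Option G) : edgeShifts F u w = edgeShifts F w u :=
  Set.ext fun _ => SimpleGraph.adj_comm _ _ _

lemma mem_edgeShifts_trVert {g : G} {u w : Option G} :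
    g ∈ edgeShifts F (trVert g u) (trVert g w) ↔ F.Adj u w := by
  simp [edgeShifts]

lemma ncard_edgeShifts_none_some (a : G) :
    (edgeShifts F none (some a)).ncard = (F.neighborSet none).ncard := by
  have hpre : edgeShifts F none (some a) =
      (fun g : G => some (a + -g)) ⁻¹' F.neighborSet none := rfl
  rw [hpre]
  refine Set.ncard_preimage_of_injective_subset_range ?_ ?_
  · intro g g' h
    simpa using h
  · rintro (_ | x) hx
    · exact absurd hx (F.loopless.irrefl _)
    · exact ⟨-x + a, by simp⟩

lemma ncard_edgeShifts_some_some (a b : G) :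
    (edgeShifts F (some a) (some b)).ncard =
      {p : G × G | F.Adj (some p.1) (some p.2) ∧ p.1 - p.2 = a - b}.ncard := by
  have hpre : edgeShifts F (some a) (some b) =
      (fun g : G => (a + -g, b + -g)) ⁻¹'
        {p : G × G | F.Adj (some p.1) (some p.2) ∧ p.1 - p.2 = a - b} := by
    ext g
    simp [edgeShifts, sub_eq_add_neg, add_assoc]
  rw [hpre]
  refine Set.ncard_preimage_of_injective_subset_range ?_ ?_
  · intro g g' h
    simpa using congrArg Prod.fst h
  · rintro ⟨p, q⟩ ⟨-, hpq⟩
    refine ⟨-p + a, ?_⟩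
    have hq : q = b + -a + p := by
      simpa [sub_eq_add_neg, neg_add_rev, add_assoc] using congrArg (fun t => -t + p) hpq
    simp [hq, add_assoc]

lemma ncard_edgeShifts_eq_two (hinf : (F.neighborSet none).ncard = 2)
    (hstarter : ∀ d : G, d ≠ 0 →
      {p : G × G | F.Adj (some p.1) (some p.2) ∧ p.1 - p.2 = d}.ncard = 2) :
    ∀ u w : Option G, u ≠ w → (edgeShifts F u w).ncard = 2
  | none, none, h => absurd rfl h
  | none, some a, _ => by rw [ncard_edgeShifts_none_some, hinf]
  | some a, none, _ => by rw [edgeShifts_comm, ncard_edgeShifts_none_some, hinf]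
  | some a, some b, h => by
    rw [ncard_edgeShifts_some_some]
    exact hstarter _ (sub_ne_zero.mpr fun hab => h (congrArg some hab))

end Translation

section Starter

variable {G : Type*} [AddGroup G] {F : SimpleGraph (Option G)} {y : G}

lemma edgeShifts_eq_pair (hy : y ≠ 0) (hfix : translateGraph y F = F) {u w : Option G} {g : G}
    (hcard : (edgeShifts F u w).ncard = 2) (hg : g ∈ edgeShifts F u w) :
    edgeShifts F u w = {g, y + g} := by
  have hsub : {g, y + g} ⊆ edgeShifts F u w := by
    rintro _ (rfl | rfl)
    · exact hg
    · show (translateGraph (y + g) F).Adj u w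
      rwa [translateGraph_add_left_of_fixed hfix]
  refine (Set.eq_of_subset_of_ncard_le hsub ?_ (Set.finite_of_ncard_ne_zero (by omega))).symm
  rw [hcard, Set.ncard_pair (by simpa using hy)]

variable (hy : y ≠ 0) (hfix : translateGraph y F = F)
  (hcover : ∀ u w : Option G, u ≠ w → (edgeShifts F u w).ncard = 2)
include hy hfix hcover

lemma translateGraph_eq_translateGraph_iff {g g' : G} :
    translateGraph g' F = translateGraph g F ↔ g' = g ∨ g' = y + g := by
  refine ⟨fun h => ?_, ?_⟩
  · obtain ⟨g₀, hg₀⟩ := Set.nonempty_of_ncard_ne_zero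
      (by rw [hcover none (some 0) (by simp)]; omega)
    obtain ⟨u, w, huw⟩ : ∃ u w, F.Adj u w := ⟨trVert (-g₀) none, trVert (-g₀) (some 0), hg₀⟩
    have hg : g ∈ edgeShifts F (trVert g u) (trVert g w) := mem_edgeShifts_trVert.mpr huw
    have hg' : g' ∈ edgeShifts F (trVert g u) (trVert g w) := by
      show (translateGraph g' F).Adj _ _
      rwa [h]
    have hne : trVert g u ≠ trVert g w := (show (translateGraph g F).Adj _ _ from hg).ne
    rwa [edgeShifts_eq_pair hy hfix (hcover _ _ hne) hg] at hg'
  · rintro (rfl | rfl)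
    · rfl
    · exact translateGraph_add_left_of_fixed hfix g

lemma ncard_range_translateGraph [Fintype G] :
    (Set.range fun g : G => translateGraph g F).ncard = Fintype.card G / 2 := by
  have hcard := card_eq_two_mul_ncard_range (fun g : G => translateGraph g F) fun g => by
    have hfib : {g' | translateGraph g' F = translateGraph g F} = {g, y + g} :=
      Set.ext fun _ => translateGraph_eq_translateGraph_iff hy hfix hcover
    rw [hfib, Set.ncard_pair (by simpa using hy)]
  omega

lemma existsUnique_translateGraph_adj {u w : Option G} (huw : u ≠ w) :
    ∃! H, H ∈ Set.range (fun g : G => translateGraph g F) ∧ H.Adj u w := by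
  obtain ⟨g, hg⟩ := Set.nonempty_of_ncard_ne_zero (by rw [hcover u w huw]; omega)
  refine ⟨translateGraph g F, ⟨⟨g, rfl⟩, hg⟩, ?_⟩
  rintro _ ⟨⟨g', rfl⟩, hg'⟩
  have hg'' : g' ∈ edgeShifts F u w := hg'
  rw [edgeShifts_eq_pair hy hfix (hcover u w huw) hg] at hg''
  exact (translateGraph_eq_translateGraph_iff hy hfix hcover).mpr hg''

end Starter

theorem stmt_14_general {G : Type*} [AddGroup G] [Fintype G]
    (F : SimpleGraph (Option G))
    (h2 : ∀ u : Option G, (F.neighborSet u).ncard = 2)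
    (hstarter : ∀ d : G, d ≠ 0 →
      {p : G × G | F.Adj (some p.1) (some p.2) ∧ p.1 - p.2 = d}.ncard = 2)
    (y : G) (hy : y ≠ 0)
    (hfix : translateGraph y F = F) :
    (Set.range fun g : G => translateGraph g F).ncard = Fintype.card G / 2 ∧
    (∀ u w : Option G, u ≠ w →
      ∃! H : SimpleGraph (Option G),
        H ∈ Set.range (fun g : G => translateGraph g F) ∧ H.Adj u w) := by
  have hcover := ncard_edgeShifts_eq_two (h2 none) hstarter
  exact ⟨ncard_range_translateGraph hy hfix hcover,
    fun _ _ huw => existsUnique_translateGraph_adj hy hfix hcover huw⟩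

/-- let `F` be a 2-starter of the finite group `G`: a 2-regular graph
on `G ∪ {∞}` whose difference list contains every nonzero element of `G` exactly
twice, and with `F + y = F` for some involution `y ∈ G`.  Then the orbit of `F`
under translation has exactly `|G|/2` distinct elements, and these translates form
a 2-factorization of the complete graph on `G ∪ {∞}`: every pair of distinct
vertices is an edge of exactly one translate. -/
theorem stmt_14 {G : Type*} [AddGroup G] [Fintype G]
    (F : SimpleGraph (Option G))
    (h2 : ∀ u : Option G, (F.neighborSet u).ncard = 2)
    (hstarter : ∀ d : G, d ≠ 0 →
      {p : G × G | F.Adj (some p.1) (some p.2) ∧ p.1 - p.2 = d}.ncard = 2)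
    (y : G) (hy : y ≠ 0) (hy2 : y + y = 0)
    (hfix : translateGraph y F = F) :
    (Set.range fun g : G => translateGraph g F).ncard = Fintype.card G / 2 ∧
    (∀ u w : Option G, u ≠ w →
      ∃! H : SimpleGraph (Option G),
        H ∈ Set.range (fun g : G => translateGraph g F) ∧ H.Adj u w) :=
  stmt_14_general F h2 hstarter y hy hfix
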